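/- Let G' be the 5-subdivision of a graph G, obtained by subdividing every edge of G 4 times so that each edge becomes a path with 5 edges. Then the minimum vertex cover satisfies τ(G') = τ(G) + 2·|E(G)|. -/

import Mathlib

/-- Vertices of the 5-subdivision of a graph on `V`: original vertices, plus 4 internal
vertices for each (oriented `a < b`) edge. -/
abbrev SubVert (V : Type*) := V ⊕ (V × V × Fin 4)

/-- One-directional adjacency of the 5-subdivision: for each edge `a —G— b` with `a < b`,
the path `a – (a,b,0) – (a,b,1) – (a,b,2) – (a,b,3) – b`. -/
def subdivRel {V : Type*} [LinearOrder V] (G : SimpleGraph V) :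
    SubVert V → SubVert V → Prop
  | Sum.inl u, Sum.inr (a, b, i) =>
      G.Adj a b ∧ a < b ∧ ((u = a ∧ i = 0) ∨ (u = b ∧ i = 3))
  | Sum.inr (a, b, i), Sum.inr (a', b', j) =>
      a = a' ∧ b = b' ∧ G.Adj a b ∧ a < b ∧ (i : ℕ) + 1 = (j : ℕ)
  | _, _ => False

/-- The 5-subdivision of `G`: every edge is replaced by a path of 5 edges. -/
def subdiv {V : Type*} [LinearOrder V] (G : SimpleGraph V) : SimpleGraph (SubVert V) where
  Adj x y := subdivRel G x y ∨ subdivRel G y x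
  symm := ⟨fun _ _ h => h.symm⟩
  loopless := by
    constructor
    rintro (u | ⟨a, b, i⟩) h
    · rcases h with h | h <;> exact h.elim
    · rcases h with ⟨-, -, -, -, h⟩ | ⟨-, -, -, -, h⟩ <;> omega

/-- `S` is a vertex cover of `H`. -/
def IsCover {W : Type*} (H : SimpleGraph W) (S : Set W) : Prop :=
  ∀ ⦃u v : W⦄, H.Adj u v → u ∈ S ∨ v ∈ S

section Aux
variable {V : Type*} [Fintype V] [LinearOrder V] (G : SimpleGraph V) [DecidableRel G.Adj]

def oPairs : Finset (V × V) := Finset.univ.filter fun p => G.Adj p.1 p.2 ∧ p.1 < p.2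

lemma mem_oPairs {p : V × V} : p ∈ oPairs G ↔ G.Adj p.1 p.2 ∧ p.1 < p.2 := by
  simp [oPairs]

lemma card_oPairs : (oPairs G).card = G.edgeFinset.card := by
  refine Finset.card_bij (s := oPairs G) (t := G.edgeFinset) (fun p _ => Sym2.mk p.1 p.2) ?_ ?_ ?_
  · rintro ⟨a, b⟩ hp
    rw [mem_oPairs] at hp
    simpa [SimpleGraph.mem_edgeFinset] using hp.1
  · rintro ⟨a, b⟩ hp ⟨c, d⟩ hq h
    rw [mem_oPairs] at hp hq
    rcases Sym2.eq_iff.1 h with ⟨rfl, rfl⟩ | ⟨rfl, rfl⟩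
    · rfl
    · exact absurd hq.2 hp.2.asymm
  · intro e he
    rw [SimpleGraph.mem_edgeFinset] at he
    induction e using Sym2.ind with
    | _ u v =>
      rcases lt_or_gt_of_ne (G.ne_of_adj he) with h | h
      · exact ⟨(u, v), (mem_oPairs G).2 ⟨he, h⟩, rfl⟩
      · exact ⟨(v, u), (mem_oPairs G).2 ⟨he.symm, h⟩, Sym2.eq_swap⟩

lemma two_le_card_filter (q : Fin 4 → Prop) [DecidablePred q]
    (h01 : q 0 ∨ q 1) (h12 : q 1 ∨ q 2) (h23 : q 2 ∨ q 3) :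
    2 ≤ (Finset.univ.filter q).card := by
  rw [Finset.card_filter, Fin.sum_univ_four]
  by_cases h0 : q 0 <;> by_cases h1 : q 1 <;> by_cases h2 : q 2 <;> by_cases h3 : q 3 <;>
    simp_all

lemma three_le_card_filter (q : Fin 4 → Prop) [DecidablePred q]
    (h0 : q 0) (h3 : q 3) (h12 : q 1 ∨ q 2) :
    3 ≤ (Finset.univ.filter q).card := by
  rw [Finset.card_filter, Fin.sum_univ_four]
  by_cases h1 : q 1 <;> by_cases h2 : q 2 <;> simp_all

/-- The cover of the subdivision built from a cover `C` of `G`. -/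
def upCover (C : Finset V) : Finset (SubVert V) :=
  C.image Sum.inl ∪ (oPairs G).biUnion fun p =>
    if p.1 ∈ C then {Sum.inr (p.1, p.2, (1 : Fin 4)), Sum.inr (p.1, p.2, (3 : Fin 4))}
    else {Sum.inr (p.1, p.2, (0 : Fin 4)), Sum.inr (p.1, p.2, (2 : Fin 4))}

lemma upCover_card (C : Finset V) :
    (upCover G C).card = C.card + 2 * (oPairs G).card := by
  rw [upCover, Finset.card_union_of_disjoint, Finset.card_image_of_injective _ Sum.inl_injective,
    Finset.card_biUnion]
  · rw [Finset.sum_congr rfl (g := fun _ => 2), Finset.sum_const, smul_eq_mul, mul_comm]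
    intro p _
    split <;> rw [Finset.card_insert_of_notMem (by simp), Finset.card_singleton]
  · intro p _ q _ hpq
    simp only [Function.onFun]
    rw [Finset.disjoint_left]
    intro x hx hy
    apply hpq
    split at hx <;> split at hy <;>
      · simp only [Finset.mem_insert, Finset.mem_singleton] at hx hy
        rcases hx with rfl | rfl <;> rcases hy with h | h <;>
          · simp only [Sum.inr.injEq, Prod.mk.injEq] at h
            exact Prod.ext h.1 h.2.1
  · rw [Finset.disjoint_left]
    rintro x hx hy
    simp only [Finset.mem_image] at hx
    obtain ⟨a, -, rfl⟩ := hx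
    simp only [Finset.mem_biUnion] at hy
    obtain ⟨p, -, hy⟩ := hy
    split at hy <;> simp at hy

lemma upCover_isCover (C : Finset V) (hC : IsCover G (C : Set V)) :
    IsCover (subdiv G) ((upCover G C : Finset (SubVert V)) : Set (SubVert V)) := by
  have memU : ∀ (a b : V) (i : Fin 4), G.Adj a b → a < b →
      ((a ∈ C ∧ (i = 1 ∨ i = 3)) ∨ (a ∉ C ∧ (i = 0 ∨ i = 2))) →
      Sum.inr (a, b, i) ∈ upCover G C := by
    intro a b i hadj hlt h
    apply Finset.mem_union_right
    rw [Finset.mem_biUnion]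
    refine ⟨(a, b), (mem_oPairs G).2 ⟨hadj, hlt⟩, ?_⟩
    rcases h with ⟨hm, h⟩ | ⟨hm, h⟩
    · rw [if_pos hm]; rcases h with rfl | rfl <;> simp
    · rw [if_neg hm]; rcases h with rfl | rfl <;> simp
  have memL : ∀ a ∈ C, Sum.inl a ∈ upCover G C := fun a ha =>
    Finset.mem_union_left _ (Finset.mem_image_of_mem _ ha)
  have main : ∀ u w : SubVert V, subdivRel G u w →
      u ∈ ((upCover G C : Finset (SubVert V)) : Set (SubVert V)) ∨
      w ∈ ((upCover G C : Finset (SubVert V)) : Set (SubVert V)) := by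
    rintro (u | ⟨a, b, i⟩) (w | ⟨a', b', j⟩) h
    · exact h.elim
    · obtain ⟨hadj, hlt, hcase⟩ := h
      by_cases hm : a' ∈ C
      · rcases hcase with ⟨rfl, rfl⟩ | ⟨rfl, rfl⟩
        · exact Or.inl (memL _ hm)
        · exact Or.inr (memU a' u 3 hadj hlt (Or.inl ⟨hm, Or.inr rfl⟩))
      · rcases hcase with ⟨rfl, rfl⟩ | ⟨rfl, rfl⟩
        · exact Or.inr (memU u b' 0 hadj hlt (Or.inr ⟨hm, Or.inl rfl⟩))
        · rcases hC hadj with ha | hb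
          · exact absurd ha hm
          · exact Or.inl (memL _ hb)
    · exact h.elim
    · obtain ⟨rfl, rfl, hadj, hlt, hij⟩ := h
      have hcases : (i = 0 ∧ j = 1) ∨ (i = 1 ∧ j = 2) ∨ (i = 2 ∧ j = 3) := by omega
      by_cases hm : a ∈ C
      · rcases hcases with ⟨rfl, rfl⟩ | ⟨rfl, rfl⟩ | ⟨rfl, rfl⟩
        · exact Or.inr (memU a b 1 hadj hlt (Or.inl ⟨hm, Or.inl rfl⟩))
        · exact Or.inl (memU a b 1 hadj hlt (Or.inl ⟨hm, Or.inl rfl⟩))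
        · exact Or.inr (memU a b 3 hadj hlt (Or.inl ⟨hm, Or.inr rfl⟩))
      · rcases hcases with ⟨rfl, rfl⟩ | ⟨rfl, rfl⟩ | ⟨rfl, rfl⟩
        · exact Or.inl (memU a b 0 hadj hlt (Or.inr ⟨hm, Or.inl rfl⟩))
        · exact Or.inr (memU a b 2 hadj hlt (Or.inr ⟨hm, Or.inr rfl⟩))
        · exact Or.inl (memU a b 2 hadj hlt (Or.inr ⟨hm, Or.inr rfl⟩))
  intro u w huw
  rcases (show subdivRel G u w ∨ subdivRel G w u from huw) with h | h
  · exact main u w h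
  · exact (main w u h).symm


def cnt (S : Finset (SubVert V)) (p : V × V) : ℕ :=
  ((Finset.univ : Finset (Fin 4)).filter fun i => Sum.inr (p.1, p.2, i) ∈ S).card

lemma sum_cnt_le (S : Finset (SubVert V)) :
    (Finset.univ.filter fun v : V => Sum.inl v ∈ S).card
      + ∑ p ∈ oPairs G, cnt S p ≤ S.card := by
  classical
  have hsub : ((Finset.univ.filter fun v : V => Sum.inl v ∈ S).image Sum.inl) ∪
      ((oPairs G).biUnion fun p =>
        ((Finset.univ : Finset (Fin 4)).filter fun i => Sum.inr (p.1, p.2, i) ∈ S).image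
          fun i => Sum.inr (p.1, p.2, i)) ⊆ S := by
    intro x hx
    rcases Finset.mem_union.1 hx with hx | hx
    · obtain ⟨v, hv, rfl⟩ := Finset.mem_image.1 hx
      exact (Finset.mem_filter.1 hv).2
    · obtain ⟨p, -, hx⟩ := Finset.mem_biUnion.1 hx
      obtain ⟨i, hi, rfl⟩ := Finset.mem_image.1 hx
      exact (Finset.mem_filter.1 hi).2
  refine le_trans (le_of_eq ?_) (Finset.card_le_card hsub)
  rw [Finset.card_union_of_disjoint, Finset.card_image_of_injective _ Sum.inl_injective,
    Finset.card_biUnion]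
  · congr 1
    refine Finset.sum_congr rfl fun p _ => ?_
    rw [Finset.card_image_of_injective, cnt]
    intro i j hij
    simpa using hij
  · intro p _ q _ hpq
    simp only [Function.onFun]
    rw [Finset.disjoint_left]
    rintro x hx hy
    obtain ⟨i, -, rfl⟩ := Finset.mem_image.1 hx
    obtain ⟨j, -, hy⟩ := Finset.mem_image.1 hy
    apply hpq
    simp only [Sum.inr.injEq, Prod.mk.injEq] at hy
    exact Prod.ext hy.1.symm hy.2.1.symm
  · rw [Finset.disjoint_left]
    rintro x hx hy
    obtain ⟨v, -, rfl⟩ := Finset.mem_image.1 hx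
    obtain ⟨p, -, hy⟩ := Finset.mem_biUnion.1 hy
    obtain ⟨i, -, h⟩ := Finset.mem_image.1 hy
    exact absurd h (by simp)

lemma lower_bound (S : Finset (SubVert V))
    (hS : IsCover (subdiv G) (S : Set (SubVert V))) :
    ∃ C : Finset V, IsCover G (C : Set V) ∧ C.card + 2 * (oPairs G).card ≤ S.card := by
  classical
  set SL := Finset.univ.filter fun v : V => Sum.inl v ∈ S with hSLdef
  have edgefacts : ∀ p ∈ oPairs G, 2 ≤ cnt S p ∧ (cnt S p ≤ 2 → p.1 ∈ SL ∨ p.2 ∈ SL) := by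
      rintro ⟨a, b⟩ hp
      rw [mem_oPairs] at hp
      obtain ⟨hadj, hlt⟩ := hp
      have adjm : ∀ i j : Fin 4, (i : ℕ) + 1 = (j : ℕ) →
          (subdiv G).Adj (Sum.inr (a, b, i)) (Sum.inr (a, b, j)) :=
        fun i j h => show subdivRel G _ _ ∨ subdivRel G _ _ from Or.inl ⟨rfl, rfl, hadj, hlt, h⟩
      have adj0 : (subdiv G).Adj (Sum.inl a) (Sum.inr (a, b, 0)) :=
        show subdivRel G _ _ ∨ subdivRel G _ _ from Or.inl ⟨hadj, hlt, Or.inl ⟨rfl, rfl⟩⟩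
      have adj3 : (subdiv G).Adj (Sum.inl b) (Sum.inr (a, b, 3)) :=
        show subdivRel G _ _ ∨ subdivRel G _ _ from Or.inl ⟨hadj, hlt, Or.inr ⟨rfl, rfl⟩⟩
      have h01 : Sum.inr (a, b, (0 : Fin 4)) ∈ S ∨ Sum.inr (a, b, (1 : Fin 4)) ∈ S := by
        simpa using hS (adjm 0 1 (by omega))
      have h12 : Sum.inr (a, b, (1 : Fin 4)) ∈ S ∨ Sum.inr (a, b, (2 : Fin 4)) ∈ S := by
        simpa using hS (adjm 1 2 (by omega))
      have h23 : Sum.inr (a, b, (2 : Fin 4)) ∈ S ∨ Sum.inr (a, b, (3 : Fin 4)) ∈ S := by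
        simpa using hS (adjm 2 3 (by omega))
      constructor
      · exact two_le_card_filter (fun i => Sum.inr (a, b, i) ∈ S) h01 h12 h23
      · intro hle
        by_contra hno
        push_neg at hno
        obtain ⟨ha, hb⟩ := hno
        rw [hSLdef, Finset.mem_filter] at ha hb
        simp only [Finset.mem_univ, true_and] at ha hb
        have h0 : Sum.inr (a, b, (0 : Fin 4)) ∈ S := by
          rcases hS adj0 with h | h
          · exact absurd (Finset.mem_coe.1 h) ha
          · exact Finset.mem_coe.1 h
        have h3 : Sum.inr (a, b, (3 : Fin 4)) ∈ S := by
          rcases hS adj3 with h | h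
          · exact absurd (Finset.mem_coe.1 h) hb
          · exact Finset.mem_coe.1 h
        have := three_le_card_filter (fun i => Sum.inr (a, b, i) ∈ S) h0 h3 h12
        have hc : cnt S (a, b) = (Finset.univ.filter fun i : Fin 4 =>
            Sum.inr (a, b, i) ∈ S).card := rfl
        omega
  refine ⟨SL ∪ ((oPairs G).filter fun p => 3 ≤ cnt S p).image Prod.fst, ?_, ?_⟩
  · -- cover property
    intro u v huv
    rcases lt_or_gt_of_ne (G.ne_of_adj huv) with h | h
    · have hp : (u, v) ∈ oPairs G := (mem_oPairs G).2 ⟨huv, h⟩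
      by_cases h3 : 3 ≤ cnt S (u, v)
      · exact Or.inl (Finset.mem_coe.2 (Finset.mem_union_right _
          (Finset.mem_image_of_mem _ (Finset.mem_filter.2 ⟨hp, h3⟩))))
      · rcases (edgefacts _ hp).2 (by omega) with hu | hv
        · exact Or.inl (Finset.mem_coe.2 (Finset.mem_union_left _ hu))
        · exact Or.inr (Finset.mem_coe.2 (Finset.mem_union_left _ hv))
    · have hp : (v, u) ∈ oPairs G := (mem_oPairs G).2 ⟨huv.symm, h⟩
      by_cases h3 : 3 ≤ cnt S (v, u)
      · exact Or.inr (Finset.mem_coe.2 (Finset.mem_union_right _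
          (Finset.mem_image_of_mem _ (Finset.mem_filter.2 ⟨hp, h3⟩))))
      · rcases (edgefacts _ hp).2 (by omega) with hv | hu
        · exact Or.inr (Finset.mem_coe.2 (Finset.mem_union_left _ hv))
        · exact Or.inl (Finset.mem_coe.2 (Finset.mem_union_left _ hu))
  · -- cardinality
    have h1 : (SL ∪ ((oPairs G).filter fun p => 3 ≤ cnt S p).image Prod.fst).card ≤
        SL.card + ((oPairs G).filter fun p => 3 ≤ cnt S p).card :=
      (Finset.card_union_le _ _).trans (Nat.add_le_add_left Finset.card_image_le _)
    have h2 : SL.card + ∑ p ∈ oPairs G, cnt S p ≤ S.card := sum_cnt_le G S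
    have h3 : 2 * (oPairs G).card + ((oPairs G).filter fun p => 3 ≤ cnt S p).card ≤
        ∑ p ∈ oPairs G, cnt S p := by
      have step : ∀ p ∈ oPairs G, 2 + (if 3 ≤ cnt S p then 1 else 0) ≤ cnt S p := by
        intro p hp
        have := (edgefacts p hp).1
        split <;> omega
      calc 2 * (oPairs G).card + ((oPairs G).filter fun p => 3 ≤ cnt S p).card
          = ∑ p ∈ oPairs G, (2 + if 3 ≤ cnt S p then 1 else 0) := by
            rw [Finset.sum_add_distrib, Finset.sum_const, Finset.card_filter,
              smul_eq_mul, mul_comm]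
        _ ≤ ∑ p ∈ oPairs G, cnt S p := Finset.sum_le_sum step
    omega

end Aux

/-- The minimum vertex cover of the 5-subdivision of `G` is exactly the minimum vertex
cover of `G` plus `2|E|`. -/
theorem subdiv_cover_number {V : Type*} [Fintype V] [LinearOrder V]
    (G : SimpleGraph V) [DecidableRel G.Adj] :
    sInf {n : ℕ | ∃ S : Finset (SubVert V),
        IsCover (subdiv G) (S : Set (SubVert V)) ∧ S.card = n} =
      sInf {n : ℕ | ∃ C : Finset V, IsCover G (C : Set V) ∧ C.card = n} +
        2 * G.edgeFinset.card := by
  classical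
  have hBne : {n : ℕ | ∃ C : Finset V, IsCover G (C : Set V) ∧ C.card = n}.Nonempty :=
    ⟨(Finset.univ : Finset V).card, Finset.univ, fun u v _ => Or.inl (by simp), rfl⟩
  obtain ⟨C0, hC0, hC0card⟩ :=
    Nat.sInf_mem (s := {n : ℕ | ∃ C : Finset V, IsCover G (C : Set V) ∧ C.card = n}) hBne
  apply le_antisymm
  · apply Nat.sInf_le
    exact ⟨upCover G C0, upCover_isCover G C0 hC0,
      by rw [upCover_card, hC0card, card_oPairs]⟩
  · refine le_csInf ⟨(upCover G C0).card, upCover G C0, upCover_isCover G C0 hC0, rfl⟩ ?_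
    rintro n ⟨S, hS, rfl⟩
    obtain ⟨C, hC, hle⟩ := lower_bound G S hS
    have hm : sInf {n : ℕ | ∃ C : Finset V, IsCover G (C : Set V) ∧ C.card = n} ≤ C.card :=
      Nat.sInf_le ⟨C, hC, rfl⟩
    rw [← card_oPairs]
    omega
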